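/- Let E₁ and E₂ be symmetric positive definite k×k real matrices and r ∈ ℝ. The block matrix R = [[E₁, r√(E₁E₂)],[r(√(E₁E₂))ᵀ, E₂]] is positive semidefinite if and only if |r| ≤ 1. -/

import Mathlib

/-!
With `S = √E₁` and `M = √(S E₂ S)`, the principal root is `P = S M S⁻¹`, and since `M² = S E₂ S`
one gets `Pᵀ E₁⁻¹ P = S⁻¹ M² S⁻¹ = E₂`. Hence the Schur complement of `E₁` in `R` is
`E₂ - r² Pᵀ E₁⁻¹ P = (1 - r²) E₂`, which is positive semidefinite exactly when `r² ≤ 1`.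
-/

open Matrix

/-- The positive semidefinite square root of a positive semidefinite matrix
(the definition removed from Mathlib, restored with its old meaning). -/
noncomputable def Matrix.PosSemidef.sqrt {n 𝕜 : Type*} [Fintype n] [DecidableEq n] [RCLike 𝕜]
    [PartialOrder 𝕜] {A : Matrix n n 𝕜} (hA : A.PosSemidef) : Matrix n n 𝕜 :=
  hA.1.eigenvectorUnitary.1 * diagonal ((↑) ∘ (√·) ∘ hA.1.eigenvalues) *
  (star hA.1.eigenvectorUnitary : Matrix n n 𝕜)

/-- The principal square root of `E₁ * E₂` for positive definite `E₁, E₂`: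
`E₁^{1/2} · (E₁^{1/2} E₂ E₁^{1/2})^{1/2} · E₁^{-1/2}`. -/
noncomputable def principalSqrtMul {k : ℕ} {E₁ E₂ : Matrix (Fin k) (Fin k) ℝ}
    (h₁ : E₁.PosDef) (h₂ : E₂.PosDef) : Matrix (Fin k) (Fin k) ℝ :=
  h₁.posSemidef.sqrt *
    (h₂.posSemidef.mul_mul_conjTranspose_same h₁.posSemidef.sqrt).sqrt *
    h₁.posSemidef.sqrt⁻¹

namespace Matrix.PosSemidef

variable {n : Type*} [Fintype n] [DecidableEq n] {A : Matrix n n ℝ}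

lemma posSemidef_sqrt (hA : A.PosSemidef) : hA.sqrt.PosSemidef :=
  (PosSemidef.diagonal fun i => by simp [Real.sqrt_nonneg]).mul_mul_conjTranspose_same
    (hA.1.eigenvectorUnitary : Matrix n n ℝ)

lemma sqrt_mul_self (hA : A.PosSemidef) : hA.sqrt * hA.sqrt = A := by
  have hU : (star hA.1.eigenvectorUnitary : Matrix n n ℝ) * hA.1.eigenvectorUnitary = 1 :=
    Unitary.coe_star_mul_self _
  conv_rhs => rw [hA.1.spectral_theorem, Unitary.conjStarAlgAut_apply]
  simp only [sqrt, Matrix.mul_assoc]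
  rw [← Matrix.mul_assoc (star _ : Matrix n n ℝ), hU, Matrix.one_mul,
    ← Matrix.mul_assoc (diagonal _), diagonal_mul_diagonal]
  congr 3
  funext i
  simpa using Real.mul_self_sqrt (hA.eigenvalues_nonneg i)

end Matrix.PosSemidef

lemma Matrix.conjTranspose_mul_inv_mul_of_mul_self_eq {n R : Type*} [Fintype n] [DecidableEq n]
    [CommRing R] [StarRing R] {S M E : Matrix n n R} [Invertible S] (hS : Sᴴ = S)
    (hM : Mᴴ = M) (hMM : M * M = S * E * S) :
    (S * M * S⁻¹)ᴴ * (S * S)⁻¹ * (S * M * S⁻¹) = E := by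
  rw [conjTranspose_mul, conjTranspose_mul, conjTranspose_nonsing_inv, hS, hM, Matrix.mul_inv_rev]
  simp only [Matrix.mul_assoc, Matrix.inv_mul_cancel_left_of_invertible,
    Matrix.mul_inv_cancel_left_of_invertible]
  rw [← Matrix.mul_assoc M M, hMM]
  simp only [Matrix.mul_assoc, Matrix.inv_mul_cancel_left_of_invertible,
    Matrix.mul_inv_of_invertible, Matrix.mul_one]

lemma conjTranspose_principalSqrtMul_mul_inv_mul {k : ℕ} {E₁ E₂ : Matrix (Fin k) (Fin k) ℝ}
    (h₁ : E₁.PosDef) (h₂ : E₂.PosDef) :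
    (principalSqrtMul h₁ h₂)ᴴ * E₁⁻¹ * principalSqrtMul h₁ h₂ = E₂ := by
  set S := h₁.posSemidef.sqrt
  have hS : Sᴴ = S := h₁.posSemidef.posSemidef_sqrt.1
  have hSS : S * S = E₁ := h₁.posSemidef.sqrt_mul_self
  have : Invertible S := (isUnit_mul_self_iff.1 (hSS ▸ h₁.isUnit)).invertible
  have hSE₂S := h₂.posSemidef.mul_mul_conjTranspose_same S
  have hMM : hSE₂S.sqrt * hSE₂S.sqrt = S * E₂ * S := by rw [hSE₂S.sqrt_mul_self, hS]
  have := conjTranspose_mul_inv_mul_of_mul_self_eq hS hSE₂S.posSemidef_sqrt.1 hMM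
  rwa [hSS] at this

lemma Matrix.PosDef.smul_posSemidef_iff {n : Type*} [Fintype n] [Nonempty n]
    {E : Matrix n n ℝ} (hE : E.PosDef) {c : ℝ} : (c • E).PosSemidef ↔ 0 ≤ c := by
  refine ⟨fun h => ?_, fun hc => hE.posSemidef.smul hc⟩
  obtain ⟨x, hx⟩ := exists_ne (0 : n → ℝ)
  have hpos : 0 < x ⬝ᵥ E *ᵥ x := by simpa using hE.dotProduct_mulVec_pos hx
  have hnonneg : 0 ≤ c * (x ⬝ᵥ E *ᵥ x) := by
    simpa [smul_mulVec, dotProduct_smul] using h.dotProduct_mulVec_nonneg x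
  exact nonneg_of_mul_nonneg_left hnonneg hpos

/-- `R = [[E₁, r√(E₁E₂)], [r(√(E₁E₂))ᵀ, E₂]]` is positive semidefinite iff `|r| ≤ 1`. -/
theorem pairwise_block_posSemidef_iff (k : ℕ) (hk : 0 < k)
    (E₁ E₂ : Matrix (Fin k) (Fin k) ℝ)
    (h₁ : E₁.PosDef) (h₂ : E₂.PosDef) (r : ℝ) :
    (Matrix.fromBlocks E₁ (r • principalSqrtMul h₁ h₂)
        (r • (principalSqrtMul h₁ h₂)ᵀ) E₂).PosSemidef ↔ |r| ≤ 1 := by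
  have : Nonempty (Fin k) := ⟨⟨0, hk⟩⟩
  have : Invertible E₁ := h₁.isUnit.invertible
  set P := principalSqrtMul h₁ h₂
  have hlower : r • Pᵀ = (r • P)ᴴ := by
    rw [conjTranspose_smul, star_trivial, conjTranspose_eq_transpose_of_trivial]
  have hschur : E₂ - (r • P)ᴴ * E₁⁻¹ * (r • P) = (1 - r ^ 2) • E₂ := by
    rw [conjTranspose_smul, star_trivial, Matrix.smul_mul, Matrix.smul_mul, Matrix.mul_smul,
      conjTranspose_principalSqrtMul_mul_inv_mul, smul_smul, sub_smul, one_smul, sq]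
  rw [hlower, PosDef.fromBlocks₁₁ _ _ h₁, hschur, h₂.smul_posSemidef_iff, sub_nonneg,
    sq_le_one_iff_abs_le_one]
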